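/- Entropy production is nonnegative and dominated by the Fisher information: for every α∈(1,2] (with φ=φ_α) and also for α=1 (with φ=φ₁), and for every f:𝒦_h→(0,∞), one has 0 ≤ H^{φ_α}(f|m_h) − H^{φ_α}(πf|m_h) ≤ (2/α)·F(f), where F is the Fisher information computed with φ=φ_α. -/

import Mathlib

open scoped BigOperators Classical RealInnerProductSpace
open Finset MeasureTheory

noncomputable section

/-- Points of the state space `ℝᵈ` with the Euclidean norm. -/
abbrev Pt (d : ℕ) : Type := EuclideanSpace ℝ (Fin d)

/-- The set `G` of moves `+_j`, `-_j`. -/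
inductive Move (d : ℕ) : Type where
  | pos : Fin d → Move d
  | neg : Fin d → Move d
  deriving DecidableEq, Fintype

namespace Move

/-- The direction of a move. -/
def dir {d : ℕ} : Move d → Fin d
  | pos j => j
  | neg j => j

/-- Action of a move on `ℝᵈ`: `(±_j) x = x ± h eⱼ`. -/
def act {d : ℕ} (h : ℝ) : Move d → Pt d → Pt d
  | pos j, x => x + EuclideanSpace.single j h
  | neg j, x => x - EuclideanSpace.single j h

end Move

/-- Action of a move in `G ∪ {e}` (`none` is the null move `e`). -/
def actO {d : ℕ} (h : ℝ) : Option (Move d) → Pt d → Pt d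
  | none, x => x
  | some γ, x => γ.act h x

/-- The grid `𝒦_h` of cell centers, where `N = 2K/h`. -/
def grid (d : ℕ) (K h : ℝ) (N : ℕ) : Finset (Pt d) :=
  Finset.image
    (fun n : Fin d → Fin N =>
      (EuclideanSpace.equiv (Fin d) ℝ).symm fun j => -K + h * ((n j : ℕ) + 1) - h / 2)
    Finset.univ

/-- The averaged potential `V^h`. -/
def Vh {d : ℕ} (h : ℝ) (V : Pt d → ℝ) (x : Pt d) : ℝ :=
  (1 / h ^ d) * ∫ s in {s : Pt d | ∀ j, s j ∈ Set.Icc (-(h / 2)) (h / 2)}, V (x + s)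

/-- The one-dimensional averaged potential `V_j^h`. -/
def Vjh (h : ℝ) (W : ℝ → ℝ) (x : ℝ) : ℝ :=
  (1 / h) * ∫ s in Set.Icc (-(h / 2)) (h / 2), W (x + s)

/-- The transition rates `c(x, γ)`. -/
def rate (d : ℕ) (K h σ : ℝ) (N : ℕ) (V : Pt d → ℝ) (x : Pt d) (γ : Move d) : ℝ :=
  if x ∈ grid d K h N ∧ γ.act h x ∈ grid d K h N then
    σ ^ 2 / h ^ 2 * Real.exp (-(Vh h V (γ.act h x) - Vh h V x) / (2 * σ ^ 2))
  else 0

/-- The generator `L_h`. -/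
def gen (d : ℕ) (K h σ : ℝ) (N : ℕ) (V : Pt d → ℝ) (f : Pt d → ℝ) (i : Pt d) : ℝ :=
  ∑ γ : Move d, rate d K h σ N V i γ * (f (γ.act h i) - f i)

/-- The normalization constant `Z`. -/
def Znorm (d : ℕ) (K h σ : ℝ) (N : ℕ) (V : Pt d → ℝ) : ℝ :=
  ∑ k ∈ grid d K h N, Real.exp (-Vh h V k / σ ^ 2)

/-- The invariant measure `m_h`. -/
def mh (d : ℕ) (K h σ : ℝ) (N : ℕ) (V : Pt d → ℝ) (i : Pt d) : ℝ :=
  Real.exp (-Vh h V i / σ ^ 2) / Znorm d K h σ N V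

/-- `κ₊(i,j)`. -/
def kplus (d : ℕ) (K h σ : ℝ) (N : ℕ) (V : Pt d → ℝ) (i : Pt d) (j : Fin d) : ℝ :=
  rate d K h σ N V i (Move.pos j) - rate d K h σ N V ((Move.pos j).act h i) (Move.pos j)
    - ∑ γ ∈ Finset.univ.filter fun γ : Move d => γ.dir ≠ j,
        max (rate d K h σ N V ((Move.pos j).act h i) γ - rate d K h σ N V i γ) 0

/-- `κ₋(i,j)`. -/
def kminus (d : ℕ) (K h σ : ℝ) (N : ℕ) (V : Pt d → ℝ) (i : Pt d) (j : Fin d) : ℝ :=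
  rate d K h σ N V i (Move.neg j) - rate d K h σ N V ((Move.neg j).act h i) (Move.neg j)
    - ∑ γ ∈ Finset.univ.filter fun γ : Move d => γ.dir ≠ j,
        max (rate d K h σ N V ((Move.neg j).act h i) γ - rate d K h σ N V i γ) 0

/-- Assumption (A3). -/
def A3 (d : ℕ) (K h σ : ℝ) (N : ℕ) (V : Pt d → ℝ) : Prop :=
  (∀ j : Fin d, ∀ i ∈ grid d K h N, (Move.pos j).act h i ∈ grid d K h N →
      0 < kplus d K h σ N V i j) ∧
  (∀ j : Fin d, ∀ i ∈ grid d K h N, (Move.neg j).act h i ∈ grid d K h N →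
      0 < kminus d K h σ N V i j)

/-- `κ_φ = min {κ₊(i,j) + κ₋(i+heⱼ,j)}`. -/
def kappaPhi (d : ℕ) (K h σ : ℝ) (N : ℕ) (V : Pt d → ℝ) : ℝ :=
  sInf { r : ℝ | ∃ j : Fin d, ∃ i ∈ grid d K h N, (Move.pos j).act h i ∈ grid d K h N ∧
    r = kplus d K h σ N V i j + kminus d K h σ N V ((Move.pos j).act h i) j }

/-- The φ-entropy `H^φ(f | m_h)`. -/
def entPhi (d : ℕ) (K h σ : ℝ) (N : ℕ) (V : Pt d → ℝ) (φ : ℝ → ℝ) (f : Pt d → ℝ) : ℝ :=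
  ∑ i ∈ grid d K h N, φ (f i) * mh d K h σ N V i
    - φ (∑ i ∈ grid d K h N, f i * mh d K h σ N V i)

/-- The Dirichlet form `E(f,g)`. -/
def dirichlet (d : ℕ) (K h σ : ℝ) (N : ℕ) (V : Pt d → ℝ) (f g : Pt d → ℝ) : ℝ :=
  -∑ i ∈ grid d K h N, f i * gen d K h σ N V g i * mh d K h σ N V i

/-- Assumption (A1) on the entropy density `φ`. -/
def A1 (φ : ℝ → ℝ) : Prop :=
  ContinuousOn φ (Set.Ici 0) ∧ (∀ x ∈ Set.Ici (0 : ℝ), 0 ≤ φ x) ∧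
  ConvexOn ℝ (Set.Ici 0) φ ∧
  (∀ x ∈ Set.Ioi (0 : ℝ), DifferentiableAt ℝ φ x) ∧
  ContinuousOn (deriv φ) (Set.Ioi 0) ∧
  ConvexOn ℝ (Set.Ioi 0 ×ˢ Set.Ioi 0)
    (fun p : ℝ × ℝ => (deriv φ p.1 - deriv φ p.2) * (p.1 - p.2))

/-- φ is continuous, nonnegative and convex on `[0,∞)`, and C¹ on `(0,∞)`. -/
def PhiRegular (φ : ℝ → ℝ) : Prop :=
  ContinuousOn φ (Set.Ici 0) ∧ (∀ x ∈ Set.Ici (0 : ℝ), 0 ≤ φ x) ∧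
  ConvexOn ℝ (Set.Ici 0) φ ∧
  (∀ x ∈ Set.Ioi (0 : ℝ), DifferentiableAt ℝ φ x) ∧
  ContinuousOn (deriv φ) (Set.Ioi 0)

/-- `f^φ(x, y) = (φ'(f x) - φ'(f y)) (f x - f y)`. -/
def fphi {d : ℕ} (φ : ℝ → ℝ) (f : Pt d → ℝ) (x y : Pt d) : ℝ :=
  (deriv φ (f x) - deriv φ (f y)) * (f x - f y)

/-- Coupling rates `𝐜(i, i+heⱼ, γ, γ̄)` for the neighboring pair `(i, i+heⱼ)`. -/
def crate (d : ℕ) (K h σ : ℝ) (N : ℕ) (V : Pt d → ℝ) (i : Pt d) (j : Fin d) :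
    Option (Move d) → Option (Move d) → ℝ
  | some a, some b =>
      if a = b then min (rate d K h σ N V i a) (rate d K h σ N V ((Move.pos j).act h i) a)
      else if a = Move.pos j ∧ b.dir ≠ j then
        max (rate d K h σ N V ((Move.pos j).act h i) b - rate d K h σ N V i b) 0
      else if a.dir ≠ j ∧ b = Move.neg j then
        max (rate d K h σ N V i a - rate d K h σ N V ((Move.pos j).act h i) a) 0
      else 0
  | some a, none => if a = Move.pos j then kplus d K h σ N V i j else 0
  | none, some b => if b = Move.neg j then kminus d K h σ N V ((Move.pos j).act h i) j else 0
  | none, none => 0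

/-- Coupling rates `𝐜(i, δ i, γ, γ̄)` for an arbitrary move `δ ∈ G`. -/
def cpl (d : ℕ) (K h σ : ℝ) (N : ℕ) (V : Pt d → ℝ) (i : Pt d) (δ : Move d)
    (γ γb : Option (Move d)) : ℝ :=
  match δ with
  | Move.pos j => crate d K h σ N V i j γ γb
  | Move.neg j => crate d K h σ N V ((Move.neg j).act h i) j γb γ

/-- Synchronous coupling rates `𝐜(i, k, γ, γ̄)`. -/
def syncRate (d : ℕ) (K h σ : ℝ) (N : ℕ) (V : Pt d → ℝ) (i k : Pt d) :
    Option (Move d) → Option (Move d) → ℝ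
  | some a, some b => if a = b then min (rate d K h σ N V i a) (rate d K h σ N V k a) else 0
  | some a, none => max (rate d K h σ N V i a - rate d K h σ N V k a) 0
  | none, some b => max (rate d K h σ N V k b - rate d K h σ N V i b) 0
  | none, none => 0

/-- The graph (ℓ¹) distance. -/
def graphDist {d : ℕ} (x y : Pt d) : ℝ := ∑ j, |x j - y j|

/-- The generator matrix `Q`. -/
def Qmat (d : ℕ) (K h σ : ℝ) (N : ℕ) (V : Pt d → ℝ) :
    Matrix {x // x ∈ grid d K h N} {x // x ∈ grid d K h N} ℝ := fun i k =>
  (∑ γ : Move d, if γ.act h i.1 = k.1 then rate d K h σ N V i.1 γ else 0)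
    - (if i = k then ∑ γ : Move d, rate d K h σ N V i.1 γ else 0)

/-- The semigroup `S_t = e^{tQ}` acting on functions. -/
def St (d : ℕ) (K h σ : ℝ) (N : ℕ) (V : Pt d → ℝ) (t : ℝ) (f : Pt d → ℝ) (i : Pt d) : ℝ :=
  if hi : i ∈ grid d K h N then
    ∑ k : {x // x ∈ grid d K h N},
      NormedSpace.exp (t • Qmat d K h σ N V) ⟨i, hi⟩ k * f k.1
  else 0

/-- The transition function `ν ↦ ν p_t` acting on measures. -/
def measPt (d : ℕ) (K h σ : ℝ) (N : ℕ) (V : Pt d → ℝ) (t : ℝ) (ν : Pt d → ℝ) (k : Pt d) : ℝ :=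
  if hk : k ∈ grid d K h N then
    ∑ i : {x // x ∈ grid d K h N},
      ν i.1 * NormedSpace.exp (t • Qmat d K h σ N V) i ⟨k, hk⟩
  else 0

/-- `ν` is a probability measure on the grid. -/
def IsProbOn (d : ℕ) (K h : ℝ) (N : ℕ) (ν : Pt d → ℝ) : Prop :=
  (∀ x ∈ grid d K h N, 0 ≤ ν x) ∧ ∑ x ∈ grid d K h N, ν x = 1

/-- Optimal transport cost between `ν` and `η` for the cost function `D`. -/
def Wgen (d : ℕ) (K h : ℝ) (N : ℕ) (D : Pt d → Pt d → ℝ) (ν η : Pt d → ℝ) : ℝ :=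
  sInf { r : ℝ | ∃ γc : Pt d → Pt d → ℝ,
    (∀ x ∈ grid d K h N, ∀ y ∈ grid d K h N, 0 ≤ γc x y) ∧
    (∀ x ∈ grid d K h N, ∑ y ∈ grid d K h N, γc x y = ν x) ∧
    (∀ y ∈ grid d K h N, ∑ x ∈ grid d K h N, γc x y = η y) ∧
    r = ∑ x ∈ grid d K h N, ∑ y ∈ grid d K h N, D x y * γc x y }

/-- The `L^p` Wasserstein distance w.r.t. the Euclidean distance. -/
def Wp (d : ℕ) (K h : ℝ) (N : ℕ) (p : ℝ) (ν η : Pt d → ℝ) : ℝ :=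
  (Wgen d K h N (fun x y => ‖x - y‖ ^ p) ν η) ^ (1 / p)

/-- The `L¹` Wasserstein distance w.r.t. the Euclidean distance. -/
def W1 (d : ℕ) (K h : ℝ) (N : ℕ) (ν η : Pt d → ℝ) : ℝ :=
  Wgen d K h N (fun x y => ‖x - y‖) ν η

/-- The `L¹` Wasserstein distance w.r.t. the graph distance. -/
def Wd1 (d : ℕ) (K h : ℝ) (N : ℕ) (ν η : Pt d → ℝ) : ℝ :=
  Wgen d K h N graphDist ν η

/-- The rescaling factor `𝒯 = 2 max_i Σ_γ c(i,γ)`. -/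
def Tcal (d : ℕ) (K h σ : ℝ) (N : ℕ) (V : Pt d → ℝ) : ℝ :=
  2 * sSup ((fun i => ∑ γ : Move d, rate d K h σ N V i γ) '' (grid d K h N : Set (Pt d)))

/-- The time step `τ = 1/𝒯`. -/
def tauStep (d : ℕ) (K h σ : ℝ) (N : ℕ) (V : Pt d → ℝ) : ℝ :=
  1 / Tcal d K h σ N V

/-- The rescaled jump rates `p(i,γ) = c(i,γ)/𝒯`. -/
def prate (d : ℕ) (K h σ : ℝ) (N : ℕ) (V : Pt d → ℝ) (i : Pt d) (γ : Move d) : ℝ :=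
  rate d K h σ N V i γ / Tcal d K h σ N V

/-- The transition matrix `π` acting on functions: `(π f)(i) = Σ_k π(i,k) f(k)`. -/
def piStep (d : ℕ) (K h σ : ℝ) (N : ℕ) (V : Pt d → ℝ) (f : Pt d → ℝ) (i : Pt d) : ℝ :=
  f i + ∑ γ : Move d, prate d K h σ N V i γ * (f (γ.act h i) - f i)

/-- The entries `π(i,k)` of the transition matrix. -/
def piKernel (d : ℕ) (K h σ : ℝ) (N : ℕ) (V : Pt d → ℝ) (i k : Pt d) : ℝ :=
  (∑ γ : Move d, if γ.act h i = k then prate d K h σ N V i γ else 0)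
    + (if i = k then 1 - ∑ γ : Move d, prate d K h σ N V i γ else 0)

/-- The transition matrix `π` acting on measures: `(ν π)(k) = Σ_i ν(i) π(i,k)`. -/
def piMeas (d : ℕ) (K h σ : ℝ) (N : ℕ) (V : Pt d → ℝ) (ν : Pt d → ℝ) (k : Pt d) : ℝ :=
  if k ∈ grid d K h N then ∑ i ∈ grid d K h N, ν i * piKernel d K h σ N V i k else 0

/-- The Fisher information `F(f)`. -/
def fisher (d : ℕ) (K h σ : ℝ) (N : ℕ) (V : Pt d → ℝ) (φ : ℝ → ℝ) (f : Pt d → ℝ) : ℝ :=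
  (1 / 2) * ∑ i ∈ grid d K h N, ∑ γ : Move d,
    prate d K h σ N V i γ * (deriv φ (f (γ.act h i)) - deriv φ (f i))
      * (f (γ.act h i) - f i) * mh d K h σ N V i

/-- The entropy densities `φ_α` (with `φ₁(x) = x log x - x + 1`). -/
def phiAlpha (α : ℝ) (x : ℝ) : ℝ :=
  if α = 1 then x * Real.log x - x + 1 else (α - 1)⁻¹ * (x ^ α - x) - x + 1

/-- Assumption (A2): strong `κ`-convexity of `V` on `[-K,K]^d`. -/
def A2 (d : ℕ) (K : ℝ) (V : Pt d → ℝ) (κ : ℝ) : Prop :=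
  ∀ x y : Pt d, (∀ j, |x j| ≤ K) → (∀ j, |y j| ≤ K) →
    κ * ‖x - y‖ ^ 2 ≤ ⟪x - y, gradient V x - gradient V y⟫

/-- `V` is additive with components `Vs j`. -/
def IsAdditive (d : ℕ) (V : Pt d → ℝ) (Vs : Fin d → ℝ → ℝ) : Prop :=
  ∀ x : Pt d, V x = ∑ j, Vs j (x j)

/-- `∇V` is Lipschitz continuous with constant `L` on `[-K,K]^d`. -/
def GradLip (d : ℕ) (K : ℝ) (V : Pt d → ℝ) (L : ℝ) : Prop :=
  ∀ x y : Pt d, (∀ j, |x j| ≤ K) → (∀ j, |y j| ≤ K) →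
    ‖gradient V x - gradient V y‖ ≤ L * ‖x - y‖

/-- The basic assumptions on the discretization parameters. -/
def Params (d : ℕ) (K h σ : ℝ) (N : ℕ) (V : Pt d → ℝ) : Prop :=
  1 ≤ d ∧ 0 < K ∧ 0 < h ∧ (N : ℝ) * h = 2 * K ∧ 0 < σ ∧ ContDiff ℝ 2 V

/-- The discrete-time coupling `𝐩` for the neighboring pair `(i, i+heⱼ)`. -/
def pcoup (d : ℕ) (K h σ : ℝ) (N : ℕ) (V : Pt d → ℝ) (i : Pt d) (j : Fin d)
    (q : Option (Move d) × Option (Move d)) : ℝ :=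
  if q = (none, none) then
    1 - ∑ q' ∈ Finset.univ.filter
          (fun q' : Option (Move d) × Option (Move d) => q' ≠ (none, none)),
        crate d K h σ N V i j q'.1 q'.2 / Tcal d K h σ N V
  else crate d K h σ N V i j q.1 q.2 / Tcal d K h σ N V

end

/-! The lazy chain `π f = f + Σ_γ p(·, γ) (f(γ ·) - f)` is reversible with respect to `m_h`, so
it preserves the mean `Σ f m_h`, and the entropy production is the `m_h`-average of
`φ(f) - φ(πf)`. Since `(πf)(i)` is a convex combination of `f(i)` and the values `f(γi)`, Jensen's
inequality bounds `φ((πf)(i))` by the same combination of the values of `φ ∘ f`, and reversibility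
makes the average of the difference vanish: this is the lower bound. The tangent-line inequality
`φ(f) - φ(πf) ≤ φ'(f) (f - πf)`, averaged and symmetrised by reversibility, bounds the entropy
production by `F(f)`; as `F(f) ≥ 0` by the two bounds and `2/α ≥ 1`, the claim follows. -/

theorem ConvexOn.add_deriv_mul_sub_le {s : Set ℝ} {φ : ℝ → ℝ} (hφ : ConvexOn ℝ s φ)
    {x y : ℝ} (hx : x ∈ s) (hy : y ∈ s) (hd : DifferentiableAt ℝ φ x) :
    φ x + deriv φ x * (y - x) ≤ φ y := by
  rcases lt_trichotomy x y with hxy | rfl | hyx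
  · have h := hφ.deriv_le_slope hx hy hxy hd
    rw [slope_def_field, le_div_iff₀ (sub_pos.2 hxy)] at h
    linarith
  · simp
  · have h := hφ.slope_le_deriv hy hx hyx hd
    rw [slope_def_field, div_le_iff₀ (sub_pos.2 hyx)] at h
    linarith

section LazyAverage

variable {ι : Type*} [Fintype ι] {s : Set ℝ} {w g : ι → ℝ} {x : ℝ}

theorem add_sum_mul_sub_eq_sum_option (w g : ι → ℝ) (x : ℝ) :
    x + ∑ γ, w γ * (g γ - x) = ∑ o : Option ι, o.elim (1 - ∑ γ, w γ) w * o.elim x g := by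
  simp only [Fintype.sum_option, Option.elim, mul_sub, Finset.sum_sub_distrib,
    ← Finset.sum_mul]
  ring

/-- Points carrying zero weight may be moved to `x`, which lies in `s`. -/
theorem exists_forall_mem_sum_mul_sub_eq (hx : x ∈ s) (hg : ∀ γ, w γ ≠ 0 → g γ ∈ s) :
    ∃ g' : ι → ℝ, (∀ γ, g' γ ∈ s) ∧
      ∀ ψ : ℝ → ℝ, ∑ γ, w γ * (ψ (g' γ) - ψ x) = ∑ γ, w γ * (ψ (g γ) - ψ x) := by
  refine ⟨fun γ => if w γ = 0 then x else g γ, fun γ => ?_, fun ψ => ?_⟩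
  · dsimp only
    split_ifs with hw
    exacts [hx, hg γ hw]
  · refine Finset.sum_congr rfl fun γ _ => ?_
    dsimp only
    split_ifs with hw <;> simp [hw]

theorem Convex.add_sum_mul_sub_mem (hs : Convex ℝ s) (hw0 : ∀ γ, 0 ≤ w γ)
    (hw1 : ∑ γ, w γ ≤ 1) (hx : x ∈ s) (hg : ∀ γ, w γ ≠ 0 → g γ ∈ s) :
    x + ∑ γ, w γ * (g γ - x) ∈ s := by
  obtain ⟨g', hg'_mem, hg'_sum⟩ := exists_forall_mem_sum_mul_sub_eq hx hg
  rw [← show ∑ γ, w γ * (g' γ - x) = ∑ γ, w γ * (g γ - x) from hg'_sum id,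
    add_sum_mul_sub_eq_sum_option]
  refine hs.sum_mem (fun o _ => ?_) ?_ fun o _ => ?_
  · cases o
    exacts [sub_nonneg.2 hw1, hw0 _]
  · simp [Fintype.sum_option]
  · cases o
    exacts [hx, hg'_mem _]

theorem ConvexOn.map_add_sum_mul_sub_le {φ : ℝ → ℝ} (hφ : ConvexOn ℝ s φ)
    (hw0 : ∀ γ, 0 ≤ w γ) (hw1 : ∑ γ, w γ ≤ 1) (hx : x ∈ s) (hg : ∀ γ, w γ ≠ 0 → g γ ∈ s) :
    φ (x + ∑ γ, w γ * (g γ - x)) ≤ φ x + ∑ γ, w γ * (φ (g γ) - φ x) := by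
  obtain ⟨g', hg'_mem, hg'_sum⟩ := exists_forall_mem_sum_mul_sub_eq hx hg
  have jensen := hφ.map_sum_le (t := Finset.univ)
    (w := fun o : Option ι => o.elim (1 - ∑ γ, w γ) w) (p := fun o : Option ι => o.elim x g')
    (fun o _ => ?_) ?_ fun o _ => ?_
  · rw [← show ∑ γ, w γ * (g' γ - x) = ∑ γ, w γ * (g γ - x) from hg'_sum id, ← hg'_sum φ,
      add_sum_mul_sub_eq_sum_option, add_sum_mul_sub_eq_sum_option w (fun γ => φ (g' γ))]
    simpa only [Fintype.sum_option, Option.elim, smul_eq_mul] using jensen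
  · cases o
    exacts [sub_nonneg.2 hw1, hw0 _]
  · simp [Fintype.sum_option]
  · cases o
    exacts [hx, hg'_mem _]

end LazyAverage

section ReversibleChain

variable {X M : Type*} [Fintype M]

def lazyStep (p : X → M → ℝ) (act : M → X → X) (f : X → ℝ) (i : X) : ℝ :=
  f i + ∑ γ, p i γ * (f (act γ i) - f i)

def phiEntropy (S : Finset X) (m : X → ℝ) (φ : ℝ → ℝ) (f : X → ℝ) : ℝ :=
  ∑ i ∈ S, φ (f i) * m i - φ (∑ i ∈ S, f i * m i)

noncomputable def fisherInfo (S : Finset X) (m : X → ℝ) (p : X → M → ℝ) (act : M → X → X)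
    (φ : ℝ → ℝ) (f : X → ℝ) : ℝ :=
  (1 / 2) * ∑ i ∈ S, ∑ γ, p i γ * (deriv φ (f (act γ i)) - deriv φ (f i))
    * (f (act γ i) - f i) * m i

structure IsReversibleLazyChain (S : Finset X) (m : X → ℝ) (p : X → M → ℝ)
    (act : M → X → X) (inv : M → M) : Prop where
  weight_nonneg : ∀ i ∈ S, 0 ≤ m i
  rate_nonneg : ∀ i ∈ S, ∀ γ, 0 ≤ p i γ
  sum_rate_le_one : ∀ i ∈ S, ∑ γ, p i γ ≤ 1
  act_mem : ∀ i ∈ S, ∀ γ, p i γ ≠ 0 → act γ i ∈ S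
  inv_involutive : Function.Involutive inv
  act_inv_act : ∀ γ i, act (inv γ) (act γ i) = i
  detailed_balance : ∀ i ∈ S, ∀ γ, act γ i ∈ S → m i * p i γ = m (act γ i) * p (act γ i) (inv γ)

namespace IsReversibleLazyChain

variable {S : Finset X} {m : X → ℝ} {p : X → M → ℝ} {act : M → X → X} {inv : M → M}
  {φ : ℝ → ℝ} {s : Set ℝ} {f : X → ℝ}

theorem sum_sum_swap (hc : IsReversibleLazyChain S m p act inv) (A : X → X → ℝ) :
    ∑ i ∈ S, ∑ γ, p i γ * A i (act γ i) * m i = ∑ i ∈ S, ∑ γ, p i γ * A (act γ i) i * m i := by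
  let T := (S ×ˢ Finset.univ).filter fun q : X × M => act q.2 q.1 ∈ S
  have hT (B : X → X → ℝ) : ∑ i ∈ S, ∑ γ, p i γ * B i (act γ i) * m i
      = ∑ q ∈ T, p q.1 q.2 * B q.1 (act q.2 q.1) * m q.1 := by
    rw [Finset.sum_filter_of_ne, Finset.sum_product]
    rintro ⟨i, γ⟩ hq hne
    have hi := (Finset.mem_product.1 hq).1
    exact hc.act_mem i hi γ fun hp => hne (by simp [hp])
  have hmem : ∀ q ∈ T, (act q.2 q.1, inv q.2) ∈ T := by
    rintro ⟨i, γ⟩ hq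
    simp only [T, Finset.mem_filter, Finset.mem_product, Finset.mem_univ, and_true] at hq ⊢
    exact ⟨hq.2, (hc.act_inv_act γ i).symm ▸ hq.1⟩
  have hinv : ∀ q ∈ T, (act (inv q.2) (act q.2 q.1), inv (inv q.2)) = q := by
    rintro ⟨i, γ⟩ -
    rw [hc.act_inv_act, hc.inv_involutive]
  rw [hT, hT (fun x y => A y x)]
  refine Finset.sum_nbij' (fun q => (act q.2 q.1, inv q.2)) (fun q => (act q.2 q.1, inv q.2))
    hmem hmem hinv hinv fun q hq => ?_
  simp only [T, Finset.mem_filter, Finset.mem_product] at hq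
  have hdb := hc.detailed_balance q.1 hq.1.1 q.2 hq.2
  simp only [hc.act_inv_act]
  linear_combination A q.1 (act q.2 q.1) * hdb

theorem sum_sum_sub_eq_zero (hc : IsReversibleLazyChain S m p act inv) (g : X → ℝ) :
    ∑ i ∈ S, ∑ γ, p i γ * (g (act γ i) - g i) * m i = 0 := by
  have hswap := hc.sum_sum_swap fun x y => g y - g x
  have hneg : ∑ i ∈ S, ∑ γ, p i γ * (g i - g (act γ i)) * m i
      = -∑ i ∈ S, ∑ γ, p i γ * (g (act γ i) - g i) * m i := by
    simp only [← Finset.sum_neg_distrib]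
    exact Finset.sum_congr rfl fun i _ => Finset.sum_congr rfl fun γ _ => by ring
  linarith

theorem sum_lazyStep_mul (hc : IsReversibleLazyChain S m p act inv) (f : X → ℝ) :
    ∑ i ∈ S, lazyStep p act f i * m i = ∑ i ∈ S, f i * m i := by
  simp only [lazyStep, add_mul, Finset.sum_add_distrib, Finset.sum_mul]
  rw [hc.sum_sum_sub_eq_zero f, add_zero]

theorem phiEntropy_sub_phiEntropy_lazyStep (hc : IsReversibleLazyChain S m p act inv)
    (φ : ℝ → ℝ) (f : X → ℝ) :
    phiEntropy S m φ f - phiEntropy S m φ (lazyStep p act f)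
      = ∑ i ∈ S, (φ (f i) - φ (lazyStep p act f i)) * m i := by
  simp only [phiEntropy, hc.sum_lazyStep_mul, sub_mul, Finset.sum_sub_distrib]
  ring

theorem lazyStep_mem (hc : IsReversibleLazyChain S m p act inv) (hs : Convex ℝ s)
    (hf : ∀ i ∈ S, f i ∈ s) {i : X} (hi : i ∈ S) : lazyStep p act f i ∈ s :=
  hs.add_sum_mul_sub_mem (hc.rate_nonneg i hi) (hc.sum_rate_le_one i hi) (hf i hi)
    fun γ hγ => hf _ (hc.act_mem i hi γ hγ)

theorem map_lazyStep_le (hc : IsReversibleLazyChain S m p act inv) (hφ : ConvexOn ℝ s φ)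
    (hf : ∀ i ∈ S, f i ∈ s) {i : X} (hi : i ∈ S) :
    φ (lazyStep p act f i) ≤ φ (f i) + ∑ γ, p i γ * (φ (f (act γ i)) - φ (f i)) :=
  hφ.map_add_sum_mul_sub_le (hc.rate_nonneg i hi) (hc.sum_rate_le_one i hi) (hf i hi)
    fun γ hγ => hf _ (hc.act_mem i hi γ hγ)

theorem phiEntropy_lazyStep_le (hc : IsReversibleLazyChain S m p act inv)
    (hφ : ConvexOn ℝ s φ) (hf : ∀ i ∈ S, f i ∈ s) :
    phiEntropy S m φ (lazyStep p act f) ≤ phiEntropy S m φ f := by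
  rw [← sub_nonneg, hc.phiEntropy_sub_phiEntropy_lazyStep]
  calc (0 : ℝ) = ∑ i ∈ S, (-∑ γ, p i γ * (φ (f (act γ i)) - φ (f i))) * m i := by
        simp only [neg_mul, Finset.sum_neg_distrib, Finset.sum_mul]
        rw [hc.sum_sum_sub_eq_zero fun x => φ (f x), neg_zero]
    _ ≤ ∑ i ∈ S, (φ (f i) - φ (lazyStep p act f i)) * m i :=
        Finset.sum_le_sum fun i hi => mul_le_mul_of_nonneg_right
          (by linarith [hc.map_lazyStep_le hφ hf hi]) (hc.weight_nonneg i hi)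

theorem fisherInfo_eq (hc : IsReversibleLazyChain S m p act inv) (φ : ℝ → ℝ) (f : X → ℝ) :
    fisherInfo S m p act φ f
      = -∑ i ∈ S, ∑ γ, p i γ * (deriv φ (f i) * (f (act γ i) - f i)) * m i := by
  have hswap := hc.sum_sum_swap fun x y => deriv φ (f x) * (f y - f x)
  have hsplit : ∑ i ∈ S, ∑ γ, p i γ * (deriv φ (f (act γ i)) - deriv φ (f i))
        * (f (act γ i) - f i) * m i
      = -∑ i ∈ S, ∑ γ, p i γ * (deriv φ (f (act γ i)) * (f i - f (act γ i))) * m i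
        - ∑ i ∈ S, ∑ γ, p i γ * (deriv φ (f i) * (f (act γ i) - f i)) * m i := by
    simp only [← Finset.sum_neg_distrib, ← Finset.sum_sub_distrib]
    exact Finset.sum_congr rfl fun i _ => Finset.sum_congr rfl fun γ _ => by ring
  rw [fisherInfo, hsplit, ← hswap]
  ring

theorem phiEntropy_sub_phiEntropy_lazyStep_le_fisherInfo
    (hc : IsReversibleLazyChain S m p act inv) (hφ : ConvexOn ℝ s φ)
    (hd : ∀ i ∈ S, DifferentiableAt ℝ φ (f i)) (hf : ∀ i ∈ S, f i ∈ s) :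
    phiEntropy S m φ f - phiEntropy S m φ (lazyStep p act f) ≤ fisherInfo S m p act φ f := by
  rw [hc.phiEntropy_sub_phiEntropy_lazyStep, hc.fisherInfo_eq, ← Finset.sum_neg_distrib]
  refine Finset.sum_le_sum fun i hi => ?_
  have htangent := hφ.add_deriv_mul_sub_le (hf i hi) (hc.lazyStep_mem hφ.1 hf hi) (hd i hi)
  have hstep : deriv φ (f i) * (lazyStep p act f i - f i)
      = ∑ γ, p i γ * (deriv φ (f i) * (f (act γ i) - f i)) := by
    rw [lazyStep, add_sub_cancel_left, Finset.mul_sum]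
    exact Finset.sum_congr rfl fun γ _ => by ring
  rw [← Finset.sum_mul, ← neg_mul, ← hstep]
  exact mul_le_mul_of_nonneg_right (by linarith) (hc.weight_nonneg i hi)

end IsReversibleLazyChain

end ReversibleChain

namespace Move

def inv {d : ℕ} : Move d → Move d
  | pos j => neg j
  | neg j => pos j

theorem inv_involutive {d : ℕ} : Function.Involutive (inv : Move d → Move d) := by
  rintro (j | j) <;> rfl

theorem act_inv_act {d : ℕ} (h : ℝ) (γ : Move d) (x : Pt d) : γ.inv.act h (γ.act h x) = x := by
  cases γ <;> simp [act, inv]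

end Move

section GridChain

variable {d : ℕ} {K h σ : ℝ} {N : ℕ} {V : Pt d → ℝ}

theorem rate_nonneg (x : Pt d) (γ : Move d) : 0 ≤ rate d K h σ N V x γ := by
  unfold rate
  split_ifs
  exacts [by positivity, le_rfl]

theorem act_mem_grid_of_rate_ne_zero {x : Pt d} {γ : Move d}
    (hγ : rate d K h σ N V x γ ≠ 0) : γ.act h x ∈ grid d K h N := by
  by_contra hx
  exact hγ (if_neg (fun hmem => hx hmem.2))

theorem Tcal_nonneg : 0 ≤ Tcal d K h σ N V := by
  refine mul_nonneg zero_le_two (Real.sSup_nonneg ?_)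
  rintro _ ⟨i, -, rfl⟩
  exact Finset.sum_nonneg fun γ _ => rate_nonneg i γ

theorem sum_rate_le_Tcal {i : Pt d} (hi : i ∈ grid d K h N) :
    ∑ γ, rate d K h σ N V i γ ≤ Tcal d K h σ N V := by
  have hle : ∑ γ, rate d K h σ N V i γ
      ≤ sSup ((fun i => ∑ γ : Move d, rate d K h σ N V i γ) '' (grid d K h N : Set (Pt d))) :=
    le_csSup ((grid d K h N).finite_toSet.image _).bddAbove (Set.mem_image_of_mem _ hi)
  have hnonneg := Tcal_nonneg (K := K) (h := h) (σ := σ) (N := N) (V := V)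
  rw [Tcal] at hnonneg ⊢
  linarith

theorem mh_nonneg (i : Pt d) : 0 ≤ mh d K h σ N V i :=
  div_nonneg (Real.exp_pos _).le (Finset.sum_nonneg fun _ _ => (Real.exp_pos _).le)

theorem mh_mul_rate {i : Pt d} {γ : Move d} (hi : i ∈ grid d K h N)
    (hγ : γ.act h i ∈ grid d K h N) :
    mh d K h σ N V i * rate d K h σ N V i γ
      = mh d K h σ N V (γ.act h i) * rate d K h σ N V (γ.act h i) γ.inv := by
  have hexp : ∀ a b : ℝ, Real.exp (-a / σ ^ 2) * Real.exp (-(b - a) / (2 * σ ^ 2))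
      = Real.exp (-b / σ ^ 2) * Real.exp (-(a - b) / (2 * σ ^ 2)) := fun a b => by
    -- both exponents equal `-(a + b) / (2σ²)`
    rw [← Real.exp_add, ← Real.exp_add]
    ring_nf
  rw [rate, rate, if_pos ⟨hi, hγ⟩, if_pos (by rw [Move.act_inv_act]; exact ⟨hγ, hi⟩),
    Move.act_inv_act, mh, mh]
  linear_combination (σ ^ 2 / h ^ 2 / Znorm d K h σ N V) * hexp (Vh h V i) (Vh h V (γ.act h i))

end GridChain

theorem isReversibleLazyChain_grid (d : ℕ) (K h σ : ℝ) (N : ℕ) (V : Pt d → ℝ) :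
    IsReversibleLazyChain (grid d K h N) (mh d K h σ N V) (prate d K h σ N V) (Move.act h)
      Move.inv where
  weight_nonneg i _ := mh_nonneg i
  rate_nonneg i _ γ := div_nonneg (rate_nonneg i γ) Tcal_nonneg
  sum_rate_le_one i hi := by
    simp only [prate, ← Finset.sum_div]
    exact div_le_one_of_le₀ (sum_rate_le_Tcal hi) Tcal_nonneg
  act_mem i _ γ hγ :=
    act_mem_grid_of_rate_ne_zero (σ := σ) (V := V) fun hr => hγ (by rw [prate, hr, zero_div])
  inv_involutive := Move.inv_involutive
  act_inv_act := Move.act_inv_act h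
  detailed_balance i hi γ hγ := by
    simp only [prate, mul_div_assoc']
    rw [mh_mul_rate hi hγ]

theorem phiAlpha_one : phiAlpha 1 = fun x => x * Real.log x - x + 1 :=
  funext fun _ => if_pos rfl

theorem phiAlpha_of_ne_one {α : ℝ} (hα : α ≠ 1) :
    phiAlpha α = fun x => (α - 1)⁻¹ * (x ^ α - x) - x + 1 :=
  funext fun _ => if_neg hα

theorem convexOn_phiAlpha {α : ℝ} (hα : 1 ≤ α) : ConvexOn ℝ (Set.Ici 0) (phiAlpha α) := by
  rcases hα.eq_or_lt with rfl | hα1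
  · rw [phiAlpha_one]
    exact (Real.convexOn_mul_log.sub (concaveOn_id (convex_Ici 0))).add
      (convexOn_const 1 (convex_Ici 0))
  · have hc : 0 ≤ (α - 1)⁻¹ := inv_nonneg.2 (sub_nonneg.2 hα)
    rw [phiAlpha_of_ne_one hα1.ne']
    refine ((((convexOn_rpow hα).smul hc).sub
      ((concaveOn_id (convex_Ici 0)).smul (add_nonneg hc zero_le_one))).add
      (convexOn_const 1 (convex_Ici 0))).congr fun x _ => ?_
    simp only [Pi.add_apply, Pi.sub_apply, smul_eq_mul, id]
    ring

theorem differentiableAt_phiAlpha (α : ℝ) {x : ℝ} (hx : 0 < x) :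
    DifferentiableAt ℝ (phiAlpha α) x := by
  by_cases hα : α = 1
  · rw [hα, phiAlpha_one]
    fun_prop (disch := exact hx.ne')
  · rw [phiAlpha_of_ne_one hα]
    fun_prop (disch := exact Or.inl hx.ne')

theorem entropy_production_bounds_general
    (d : ℕ) (K h σ : ℝ) (N : ℕ) (V : Pt d → ℝ)
    (α : ℝ) (hα : α = 1 ∨ (1 < α ∧ α ≤ 2))
    (f : Pt d → ℝ) (hf : ∀ i ∈ grid d K h N, 0 < f i) :
    0 ≤ entPhi d K h σ N V (phiAlpha α) f
          - entPhi d K h σ N V (phiAlpha α) (piStep d K h σ N V f) ∧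
    entPhi d K h σ N V (phiAlpha α) f
        - entPhi d K h σ N V (phiAlpha α) (piStep d K h σ N V f)
      ≤ (2 / α) * fisher d K h σ N V (phiAlpha α) f := by
  obtain ⟨hα1, hα2⟩ : 1 ≤ α ∧ α ≤ 2 := by
    rcases hα with rfl | ⟨hα1, hα2⟩
    exacts [by norm_num, ⟨hα1.le, hα2⟩]
  have hc := isReversibleLazyChain_grid d K h σ N V
  have hφ : ConvexOn ℝ (Set.Ioi 0) (phiAlpha α) :=
    (convexOn_phiAlpha hα1).subset Set.Ioi_subset_Ici_self (convex_Ioi 0)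
  have hlower : entPhi d K h σ N V (phiAlpha α) (piStep d K h σ N V f)
      ≤ entPhi d K h σ N V (phiAlpha α) f :=
    hc.phiEntropy_lazyStep_le hφ hf
  have hupper : entPhi d K h σ N V (phiAlpha α) f
        - entPhi d K h σ N V (phiAlpha α) (piStep d K h σ N V f)
      ≤ fisher d K h σ N V (phiAlpha α) f :=
    hc.phiEntropy_sub_phiEntropy_lazyStep_le_fisherInfo hφ
      (fun i hi => differentiableAt_phiAlpha α (hf i hi)) hf
  refine ⟨sub_nonneg.2 hlower, hupper.trans (le_mul_of_one_le_left ?_ ?_)⟩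
  · linarith
  · exact (one_le_div (by linarith)).2 hα2

/-- Entropy production is nonnegative and dominated by the Fisher information. -/
theorem entropy_production_bounds
    (d : ℕ) (K h σ : ℝ) (N : ℕ) (V : Pt d → ℝ) (hp : Params d K h σ N V)
    (α : ℝ) (hα : α = 1 ∨ (1 < α ∧ α ≤ 2))
    (f : Pt d → ℝ) (hf : ∀ i ∈ grid d K h N, 0 < f i) :
    0 ≤ entPhi d K h σ N V (phiAlpha α) f
          - entPhi d K h σ N V (phiAlpha α) (piStep d K h σ N V f) ∧
    entPhi d K h σ N V (phiAlpha α) f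
        - entPhi d K h σ N V (phiAlpha α) (piStep d K h σ N V f)
      ≤ (2 / α) * fisher d K h σ N V (phiAlpha α) f :=
  entropy_production_bounds_general d K h σ N V α hα f hf
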